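/- For every finite simple graph G on n ≥ 2 vertices, the number of spanning trees satisfies τ(G) ≤ (n/(n−1))^{n−1} · det(Δ)^{1 − 1/n}, where Δ is the diagonal degree matrix of G. -/

import Mathlib

open Matrix
open scoped Classical

/-- Adjacency matrix of a simple graph, as a real matrix. -/
noncomputable def adjMat {n : ℕ} (G : SimpleGraph (Fin n)) : Matrix (Fin n) (Fin n) ℝ :=
  Matrix.of fun i j => if G.Adj i j then (1 : ℝ) else 0

/-- Diagonal degree matrix of a simple graph. -/
noncomputable def degMat {n : ℕ} (G : SimpleGraph (Fin n)) : Matrix (Fin n) (Fin n) ℝ :=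
  Matrix.diagonal fun i => (Nat.card (G.neighborSet i) : ℝ)

/-- Combinatorial Laplacian. -/
noncomputable def lapMat {n : ℕ} (G : SimpleGraph (Fin n)) : Matrix (Fin n) (Fin n) ℝ :=
  degMat G - adjMat G

/-- Number of spanning trees of `G`: spanning subgraphs of `G` that are trees. -/
noncomputable def numSpanningTrees {n : ℕ} (G : SimpleGraph (Fin n)) : ℕ :=
  Nat.card {H : SimpleGraph (Fin n) // H ≤ G ∧ H.IsTree}

/-- Matrix logarithm via functional calculus (log of eigenvalues), with log 0 = 0. -/
noncomputable def matLog {n : ℕ} (M : Matrix (Fin n) (Fin n) ℝ) : Matrix (Fin n) (Fin n) ℝ :=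
  if hM : M.IsHermitian then
    (hM.eigenvectorUnitary : Matrix (Fin n) (Fin n) ℝ) *
      Matrix.diagonal (fun i => Real.log (hM.eigenvalues i)) *
      star (hM.eigenvectorUnitary : Matrix (Fin n) (Fin n) ℝ)
  else 0

/-- Quantum relative entropy S(σ₁‖σ₂) = Tr(σ₁ log σ₁) − Tr(σ₁ log σ₂). -/
noncomputable def qRelEntropy {n : ℕ} (σ1 σ2 : Matrix (Fin n) (Fin n) ℝ) : ℝ :=
  (σ1 * matLog σ1).trace - (σ1 * matLog σ2).trace

/-- Projection Π_ℓ = I − E_ℓℓ. -/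
noncomputable def projP {n : ℕ} (ℓ : Fin n) : Matrix (Fin n) (Fin n) ℝ :=
  1 - Matrix.single ℓ ℓ 1

/-- Q_ℓ = E_ℓℓ. -/
noncomputable def projQ {n : ℕ} (ℓ : Fin n) : Matrix (Fin n) (Fin n) ℝ :=
  Matrix.single ℓ ℓ 1

/-- Pinching map Φ_ℓ. -/
noncomputable def pinch {n : ℕ} (ℓ : Fin n) (M : Matrix (Fin n) (Fin n) ℝ) :
    Matrix (Fin n) (Fin n) ℝ :=
  projP ℓ * M * projP ℓ + projQ ℓ * M * projQ ℓ

/-- Maximum degree. -/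
noncomputable def maxDeg {n : ℕ} (G : SimpleGraph (Fin n)) : ℕ :=
  Finset.univ.sup fun i => Nat.card (G.neighborSet i)

/-! Root every spanning tree at a vertex `ℓ` of maximum degree. A tree is recovered from the map
sending each vertex `i ≠ ℓ` to its parent, a neighbour of `i` in `G`, so
`τ(G) ≤ ∏_{i ≠ ℓ} dᵢ = det Δ / d_ℓ`; and `d_ℓ ≥ (det Δ)^{1/n}` because `d_ℓ` is the largest
degree. The constant `(n/(n-1))^{n-1}` is at least `1`. -/

namespace SimpleGraph

variable {V : Type*}

namespace IsTree

variable {H : SimpleGraph V}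

/-- Junk value at the root: `hH.parent r r = r`. -/
noncomputable def parent (hH : H.IsTree) (r v : V) : V :=
  (hH.existsUnique_path v r).exists.choose.snd

theorem parent_eq_snd (hH : H.IsTree) {r v : V} {p : H.Walk v r} (hp : p.IsPath) :
    hH.parent r v = p.snd := by
  rw [parent, (hH.existsUnique_path v r).unique (hH.existsUnique_path v r).exists.choose_spec hp]

theorem adj_parent (hH : H.IsTree) {r v : V} (hv : v ≠ r) : H.Adj v (hH.parent r v) := by
  obtain ⟨p, hp⟩ := (hH.existsUnique_path v r).exists
  rw [hH.parent_eq_snd hp]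
  exact p.adj_snd (Walk.not_nil_of_ne hv)

theorem adj_iff_parent (hH : H.IsTree) (r : V) {a b : V} :
    H.Adj a b ↔ (a ≠ r ∧ hH.parent r a = b) ∨ (b ≠ r ∧ hH.parent r b = a) := by
  refine ⟨fun hab => ?_, ?_⟩
  · obtain ⟨p, hp⟩ := (hH.existsUnique_path a r).exists
    by_cases hb : b ∈ p.support
    · have ha : a ≠ r := by
        rintro rfl
        rw [Walk.isPath_iff_nil] at hp
        rw [hp.eq_nil, Walk.support_nil, List.mem_singleton] at hb
        exact hab.ne hb.symm
      exact Or.inl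
        ⟨ha, (hH.parent_eq_snd hp).trans (hH.isAcyclic.eq_snd_of_adj_start hp hab hb).symm⟩
    · refine Or.inr ⟨fun hbr => hb (hbr ▸ p.end_mem_support), ?_⟩
      exact (hH.parent_eq_snd (hp.cons hb)).trans (p.snd_cons hab.symm)
  · rintro (⟨ha, rfl⟩ | ⟨hb, rfl⟩)
    · exact hH.adj_parent ha
    · exact (hH.adj_parent hb).symm

theorem ext_of_parent_eq {H₁ H₂ : SimpleGraph V} (h₁ : H₁.IsTree) (h₂ : H₂.IsTree)
    (r : V)
    (h : ∀ v, v ≠ r → h₁.parent r v = h₂.parent r v) : H₁ = H₂ := by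
  ext a b
  rw [h₁.adj_iff_parent r, h₂.adj_iff_parent r]
  exact or_congr (and_congr_right fun ha => by rw [h a ha])
    (and_congr_right fun hb => by rw [h b hb])

end IsTree

theorem card_spanningTrees_le_prod_card_neighborSet [Fintype V] [DecidableEq V]
    (G : SimpleGraph V) (r : V) :
    Nat.card {H : SimpleGraph V // H ≤ G ∧ H.IsTree} ≤
      ∏ v ∈ Finset.univ.erase r, Nat.card (G.neighborSet v) := by
  let parents : {H : SimpleGraph V // H ≤ G ∧ H.IsTree} →
      ∀ v : (Finset.univ.erase r : Finset V), G.neighborSet v :=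
    fun H v => ⟨H.2.2.parent r v, H.2.1 (H.2.2.adj_parent (Finset.ne_of_mem_erase v.2))⟩
  have h_inj : Function.Injective parents := by
    rintro ⟨H₁, _, h₁⟩ ⟨H₂, _, h₂⟩ h_eq
    exact Subtype.ext <| IsTree.ext_of_parent_eq h₁ h₂ r fun v hv =>
      congrArg Subtype.val (congrFun h_eq ⟨v, by simpa using hv⟩)
  calc _ ≤ _ := Nat.card_le_card_of_injective parents h_inj
    _ = _ := by
      rw [Nat.card_pi]
      exact Finset.prod_coe_sort _ fun v => Nat.card (G.neighborSet v)

end SimpleGraph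

theorem Finset.prod_erase_le_rpow_of_forall_le {ι : Type*} [Fintype ι] [DecidableEq ι]
    {x : ι → ℝ} (hx : ∀ i, 0 ≤ x i) {ℓ : ι} (hℓ : ∀ i, x i ≤ x ℓ) :
    ∏ i ∈ univ.erase ℓ, x i ≤ (∏ i, x i) ^ (1 - 1 / (Fintype.card ι : ℝ)) := by
  set n := Fintype.card ι
  set Q := ∏ i ∈ univ.erase ℓ, x i
  have hn : n ≠ 0 := (Fintype.card_pos_iff.2 ⟨ℓ⟩).ne'
  have hQ : 0 ≤ Q := prod_nonneg fun i _ => hx i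
  have hP₀ : 0 ≤ ∏ i, x i := prod_nonneg fun i _ => hx i
  have hP : ∏ i, x i = Q * x ℓ := (prod_erase_mul _ _ (mem_univ ℓ)).symm
  have hQ_le : Q ≤ x ℓ ^ (n - 1) := by
    calc Q ≤ ∏ _i ∈ univ.erase ℓ, x ℓ := prod_le_prod (fun i _ => hx i) fun i _ => hℓ i
      _ = x ℓ ^ (n - 1) := by rw [prod_const, card_erase_of_mem (mem_univ ℓ), card_univ]
  -- comparing `n`-th powers avoids dividing by `x ℓ`, which may vanish
  have hQ_pow : Q ^ n ≤ (∏ i, x i) ^ (n - 1) := by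
    calc Q ^ n = Q ^ (n - 1) * Q := by
          rw [← pow_succ, Nat.sub_add_cancel (Nat.one_le_iff_ne_zero.2 hn)]
      _ ≤ Q ^ (n - 1) * x ℓ ^ (n - 1) := by gcongr
      _ = (∏ i, x i) ^ (n - 1) := by rw [hP, mul_pow]
  have hexp : (1 - 1 / (n : ℝ)) * n = ((n - 1 : ℕ) : ℝ) := by
    rw [Nat.cast_sub (Nat.one_le_iff_ne_zero.2 hn), Nat.cast_one]
    field_simp
  rwa [← pow_le_pow_iff_left₀ hQ (Real.rpow_nonneg hP₀ _) hn,
    ← Real.rpow_natCast ((∏ i, x i) ^ (1 - 1 / (n : ℝ))) n, ← Real.rpow_mul hP₀, hexp,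
    Real.rpow_natCast]

/-- τ(G) ≤ (n/(n−1))^{n−1} · det(Δ)^{1 − 1/n}. -/
theorem numSpanningTrees_le_detDeg_rpow' (n : ℕ) (hn : 2 ≤ n)
    (G : SimpleGraph (Fin n)) :
    (numSpanningTrees G : ℝ) ≤
      ((n : ℝ) / ((n : ℝ) - 1)) ^ (n - 1) * (degMat G).det ^ (1 - 1 / (n : ℝ)) := by
  set d : Fin n → ℝ := fun i => Nat.card (G.neighborSet i)
  have hd : ∀ i, 0 ≤ d i := fun i => Nat.cast_nonneg _
  have hdet : (degMat G).det = ∏ i, d i := det_diagonal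
  have : Nonempty (Fin n) := ⟨⟨0, by omega⟩⟩
  obtain ⟨ℓ, hℓ⟩ := Finite.exists_max d
  have hconst : 1 ≤ ((n : ℝ) / ((n : ℝ) - 1)) ^ (n - 1) := by
    have : (2 : ℝ) ≤ n := by exact_mod_cast hn
    exact one_le_pow₀ ((one_le_div (by linarith)).2 (by linarith))
  calc (numSpanningTrees G : ℝ) ≤ ∏ i ∈ Finset.univ.erase ℓ, d i := by
        rw [numSpanningTrees]
        exact (Nat.cast_le.2 (G.card_spanningTrees_le_prod_card_neighborSet ℓ)).trans_eq
          (Nat.cast_prod _ _)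
    _ ≤ (degMat G).det ^ (1 - 1 / (n : ℝ)) := by
        simpa only [hdet, Fintype.card_fin] using Finset.prod_erase_le_rpow_of_forall_le hd hℓ
    _ ≤ _ := le_mul_of_one_le_left
        (Real.rpow_nonneg (hdet ▸ Finset.prod_nonneg fun i _ => hd i) _) hconst
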